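/- arXiv:2012.13855 — 12 statements merged into one kernel-verified Lean document; each statement's English description precedes it below -/
import Mathlib

section
/- Let R be a commutative ring with unity and A a 2×2 matrix over R with trace t and determinant δ. For any positive integer n, the trace of A^n equals t^n + Σ_{r=1}^{⌊n/2⌋} (-1)^r (n/r) C(n-r-1, r-1) t^{n-2r} δ^r, where the coefficients (n/r)·C(n-r-1,r-1) are integers. -/
private def lc (n r : ℕ) : ℕ := (n - r).choose r + (n - r - 1).choose (r - 1)

private lemma lc_key {n r : ℕ} (h1 : 1 ≤ r) (h2 : 2 * r ≤ n) :
    n * (n - r - 1).choose (r - 1) = r * lc n r := by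
  have h := Nat.add_one_mul_choose_eq (n - r - 1) (r - 1)
  rw [show n - r - 1 + 1 = n - r by omega, show r - 1 + 1 = r by omega] at h
  have e3 : n * (n - r - 1).choose (r - 1)
      = (n - r) * (n - r - 1).choose (r - 1) + r * (n - r - 1).choose (r - 1) := by
    rw [← add_mul]
    congr 1
    omega
  rw [e3, h]
  unfold lc
  ring

private lemma lc_zero {n s : ℕ} (hn : 2 ≤ n) (h : n < 2 * s) : lc n s = 0 := by
  have hs : 2 ≤ s := by omega
  unfold lc
  rw [Nat.choose_eq_zero_of_lt (by omega), Nat.choose_eq_zero_of_lt (by omega)]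

private lemma lc_rec {n r : ℕ} (hn : 2 ≤ n) (hr : 1 ≤ r) :
    lc (n + 2) r = lc (n + 1) r + (if r = 1 then 1 else lc n (r - 1)) := by
  rcases Nat.lt_or_ge n r with hbig | hle
  · have h1 : lc (n + 2) r = 0 := lc_zero (by omega) (by omega)
    have h2 : lc (n + 1) r = 0 := lc_zero (by omega) (by omega)
    have h3 : lc n (r - 1) = 0 := lc_zero (by omega) (by omega)
    have : r ≠ 1 := by omega
    simp [h1, h2, h3, this]
  · rcases Nat.lt_or_ge r 2 with h1 | h2
    · have : r = 1 := by omega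
      subst this
      simp [lc, Nat.choose_one_right]
    · obtain ⟨s, rfl⟩ : ∃ s, r = s + 2 := ⟨r - 2, by omega⟩
      obtain ⟨a, rfl⟩ : ∃ a, n = s + 2 + a := ⟨n - (s+2), by omega⟩
      simp only [lc, if_neg (by omega : ¬ s + 2 = 1)]
      rw [show s+2+a+2-(s+2) = a+2 by omega, show a+2-1 = a+1 by omega,
          show s+2-1 = s+1 by omega,
          show s+2+a+1-(s+2) = a+1 by omega, show a+1-1 = a by omega,
          show s+2+a-(s+1) = a+1 by omega, show s+1-1 = s by omega]
      simp only [Nat.add_sub_cancel]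
      have p1 := Nat.choose_succ_succ (a+1) (s+1)
      have p2 := Nat.choose_succ_succ a s
      simp only [Nat.succ_eq_add_one] at p1 p2
      rw [show a+1+1 = a+2 by omega, show s+1+1 = s+2 by omega] at p1
      omega

private noncomputable def Fc {S : Type*} [CommRing S] (t δ : S) (m : ℕ) : S :=
  t ^ m + ∑ r ∈ Finset.Icc 1 (m / 2), (-1 : S) ^ r * (lc m r : S) * t ^ (m - 2 * r) * δ ^ r

private lemma sum_ext {S : Type*} [CommRing S] (t δ : S) (m N : ℕ) (hm : 2 ≤ m) (hN : m ≤ N) :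
    ∑ r ∈ Finset.Icc 1 (m / 2), (-1 : S) ^ r * (lc m r : S) * t ^ (m - 2 * r) * δ ^ r
    = ∑ r ∈ Finset.Icc 1 N, (-1 : S) ^ r * (lc m r : S) * t ^ (m - 2 * r) * δ ^ r := by
  apply Finset.sum_subset
  · apply Finset.Icc_subset_Icc_right
    omega
  · intro r hr hr'
    simp only [Finset.mem_Icc] at hr hr'
    have : lc m r = 0 := lc_zero hm (by omega)
    simp [this]

private lemma Fc_rec {S : Type*} [CommRing S] (t δ : S) (n : ℕ) (hn : 2 ≤ n) :
    Fc t δ (n + 2) = t * Fc t δ (n + 1) - δ * Fc t δ n := by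
  unfold Fc
  rw [sum_ext t δ (n+2) (n+2) (by omega) le_rfl,
      sum_ext t δ (n+1) (n+2) (by omega) (by omega),
      sum_ext t δ n (n+1) (by omega) (by omega)]
  have hshift : δ * ∑ r ∈ Finset.Icc 1 (n+1), (-1 : S) ^ r * (lc n r : S) * t ^ (n - 2 * r) * δ ^ r
      = ∑ r ∈ Finset.Icc 2 (n+2),
          (-1 : S) ^ (r-1) * (lc n (r-1) : S) * t ^ (n - 2 * (r-1)) * δ ^ r := by
    rw [Finset.mul_sum, show (2 : ℕ) = 1 + 1 by rfl, show n + 2 = (n + 1) + 1 by rfl,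
        ← Finset.map_add_right_Icc 1 (n+1) 1, Finset.sum_map]
    apply Finset.sum_congr rfl
    intro r hr
    simp only [addRightEmbedding_apply, Nat.add_sub_cancel]
    ring
  have hsplit : (∑ r ∈ Finset.Icc 1 (n+2),
        (-1 : S) ^ (r-1) * ((if r = 1 then 1 else lc n (r-1)) : S) * t ^ (n - 2 * (r-1)) * δ ^ r)
      = δ * t ^ n + ∑ r ∈ Finset.Icc 2 (n+2),
          (-1 : S) ^ (r-1) * (lc n (r-1) : S) * t ^ (n - 2 * (r-1)) * δ ^ r := by
    rw [show Finset.Icc 1 (n+2) = insert 1 (Finset.Icc 2 (n+2)) by ext x; simp; omega,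
        Finset.sum_insert (by simp)]
    congr 1
    · norm_num; ring
    · apply Finset.sum_congr rfl
      intro x hx
      simp only [Finset.mem_Icc] at hx
      rw [if_neg (by omega)]
  rw [mul_add, mul_add, hshift, ← hsplit, show t * t ^ (n+1) = t ^ (n+2) by ring,
      Finset.mul_sum, add_sub_assoc, ← Finset.sum_sub_distrib]
  congr 1
  apply Finset.sum_congr rfl
  intro r hr
  simp only [Finset.mem_Icc] at hr
  obtain ⟨s, rfl⟩ : ∃ s, r = s + 1 := ⟨r - 1, by omega⟩
  rw [lc_rec hn (by omega)]
  push_cast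
  by_cases hc : 2 * (s + 1) ≤ n + 1
  · rw [show n + 2 - 2 * (s+1) = (n + 1 - 2 * (s+1)) + 1 by omega,
        show n - 2 * s = (n + 1 - 2 * (s+1)) + 1 by omega]
    ring
  · have hz : lc (n+1) (s+1) = 0 := lc_zero (by omega) (by omega)
    rw [hz, show n - 2 * s = n + 2 - 2 * (s+1) by omega]
    push_cast
    ring

theorem trace_pow_two_by_two (R : Type*) [CommRing R]
    (A : Matrix (Fin 2) (Fin 2) R) (t δ : R)
    (ht : t = Matrix.trace A) (hδ : δ = A.det) (n : ℕ) (hn : 0 < n) :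
    (∀ r ∈ Finset.Icc 1 (n / 2), r ∣ n * Nat.choose (n - r - 1) (r - 1)) ∧
    Matrix.trace (A ^ n) =
      t ^ n + ∑ r ∈ Finset.Icc 1 (n / 2),
        (-1 : R) ^ r * ((n * Nat.choose (n - r - 1) (r - 1)) / r : ℕ) *
          t ^ (n - 2 * r) * δ ^ r := by
  have hCH : A ^ 2 = t • A - δ • (1 : Matrix (Fin 2) (Fin 2) R) := by
    rw [ht, hδ]
    ext i j
    rw [pow_two]
    fin_cases i <;> fin_cases j <;>
      simp [Matrix.mul_apply, Fin.sum_univ_two, Matrix.trace_fin_two, Matrix.det_fin_two,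
        Matrix.one_apply] <;> ring
  have trace_rec : ∀ k : ℕ,
      Matrix.trace (A ^ (k + 2)) = t * Matrix.trace (A ^ (k + 1)) - δ * Matrix.trace (A ^ k) := by
    intro k
    have : A ^ (k + 2) = t • A ^ (k + 1) - δ • A ^ k := by
      rw [show k + 2 = k + 1 + 1 by rfl, pow_succ, pow_succ]
      calc A ^ k * A * A = A ^ k * A ^ 2 := by rw [pow_two, mul_assoc]
        _ = t • (A ^ k * A) - δ • A ^ k := by
            rw [hCH, Matrix.mul_sub, Matrix.mul_smul, Matrix.mul_smul, Matrix.mul_one]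
    rw [this, Matrix.trace_sub, Matrix.trace_smul, Matrix.trace_smul, smul_eq_mul, smul_eq_mul,
      pow_succ]
  have htr1 : Matrix.trace (A ^ 1) = Fc t δ 1 := by
    simp [Fc, ← ht]
  have htr2 : Matrix.trace (A ^ 2) = Fc t δ 2 := by
    rw [hCH, Matrix.trace_sub, Matrix.trace_smul, Matrix.trace_smul, Matrix.trace_one]
    simp [Fc, ← ht, lc]
    ring
  have htr3 : Matrix.trace (A ^ 3) = Fc t δ 3 := by
    rw [show (3:ℕ) = 1 + 2 by rfl, trace_rec 1, pow_one, htr2, ← ht]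
    simp [Fc, lc]
    ring
  have key : ∀ m : ℕ, Matrix.trace (A ^ (m + 1)) = Fc t δ (m + 1) := by
    intro m
    induction m using Nat.strong_induction_on with
    | _ m ih =>
      match m with
      | 0 => exact htr1
      | 1 => exact htr2
      | 2 => exact htr3
      | (k+3) =>
        rw [show k + 3 + 1 = (k + 2) + 2 by rfl, trace_rec (k+2), Fc_rec t δ (k+2) (by omega),
            show k + 2 + 1 = (k + 2) + 1 by rfl,
            ih (k+2) (by omega), ih (k+1) (by omega)]
  obtain ⟨m, rfl⟩ : ∃ m, n = m + 1 := ⟨n - 1, by omega⟩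
  constructor
  · intro r hr
    simp only [Finset.mem_Icc] at hr
    exact ⟨lc (m+1) r, by rw [← lc_key hr.1 (by omega)]⟩
  · rw [key m]
    unfold Fc
    congr 1
    apply Finset.sum_congr rfl
    intro r hr
    simp only [Finset.mem_Icc] at hr
    rw [show (m + 1) * Nat.choose (m + 1 - r - 1) (r - 1) / r = lc (m+1) r from by
      rw [lc_key hr.1 (by omega), Nat.mul_div_cancel_left _ (by omega : 0 < r)]]
end

section
/- Let R be a commutative ring with unity. A matrix M ∈ M_2(R) is the sixth power of some matrix B ∈ M_2(R) only if there exist t, δ ∈ R with Tr M = t^6 - 6t^4δ + 9t^2δ^2 - 2δ^3; conversely, for any t, δ ∈ R, there exists B ∈ M_2(R) with Tr(B^6) = t^6 - 6t^4δ + 9t^2δ^2 - 2δ^3. -/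
lemma trace_pow_six_aux {R : Type*} [CommRing R] (B : Matrix (Fin 2) (Fin 2) R) :
    Matrix.trace (B ^ 6) =
      (Matrix.trace B) ^ 6 - 6 * (Matrix.trace B) ^ 4 * B.det +
        9 * (Matrix.trace B) ^ 2 * B.det ^ 2 - 2 * B.det ^ 3 := by
  simp only [pow_succ, pow_zero, one_mul, Matrix.trace_fin_two, Matrix.det_fin_two,
    Matrix.mul_apply, Fin.sum_univ_two]
  ring

theorem sixth_power_trace_characterization (R : Type*) [CommRing R] :
    (∀ M : Matrix (Fin 2) (Fin 2) R, (∃ B : Matrix (Fin 2) (Fin 2) R, M = B ^ 6) →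
      ∃ t δ : R, Matrix.trace M =
        t ^ 6 - 6 * t ^ 4 * δ + 9 * t ^ 2 * δ ^ 2 - 2 * δ ^ 3) ∧
    (∀ t δ : R, ∃ B : Matrix (Fin 2) (Fin 2) R,
      Matrix.trace (B ^ 6) =
        t ^ 6 - 6 * t ^ 4 * δ + 9 * t ^ 2 * δ ^ 2 - 2 * δ ^ 3) := by
  constructor
  · rintro M ⟨B, rfl⟩
    exact ⟨Matrix.trace B, B.det, trace_pow_six_aux B⟩
  · intro t δ
    refine ⟨!![t, -δ; 1, 0], ?_⟩
    rw [trace_pow_six_aux]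
    simp [Matrix.trace_fin_two, Matrix.det_fin_two]
end

section
/- Let R be a commutative ring with unity. The set S = { x_0^6 - 2x_1^3 + 3x_2^2 mod 6R : x_0, x_1, x_2 ∈ R } is an additive subgroup of R/6R. -/
theorem sixth_power_set_subgroup (R : Type*) [CommRing R] :
    ∃ S : AddSubgroup (R ⧸ Ideal.span ({6} : Set R)),
      (S : Set (R ⧸ Ideal.span ({6} : Set R))) =
        {z | ∃ x₀ x₁ x₂ : R,
          z = Ideal.Quotient.mk (Ideal.span ({6} : Set R))
            (x₀ ^ 6 - 2 * x₁ ^ 3 + 3 * x₂ ^ 2)} := by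
  refine ⟨{
    carrier := {z | ∃ x₀ x₁ x₂ : R,
          z = Ideal.Quotient.mk (Ideal.span ({6} : Set R))
            (x₀ ^ 6 - 2 * x₁ ^ 3 + 3 * x₂ ^ 2)}
    zero_mem' := ⟨0, 0, 0, by norm_num⟩
    add_mem' := ?_
    neg_mem' := ?_ }, rfl⟩
  · rintro p q ⟨a0, a1, a2, rfl⟩ ⟨b0, b1, b2, rfl⟩
    refine ⟨0, a0^2 + a1 + b0^2 + b1, a0^3 + a2 + b0^3 + b2, ?_⟩
    rw [← map_add, Ideal.Quotient.mk_eq_mk_iff_sub_mem, Ideal.mem_span_singleton]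
    exact ⟨-((-1)*b0^2*b1^2 + b0^3*b2 + (-1)*b0^4*b1 + a2*b2 + a2*b0^3 +
      (-1)*a1*b1^2 + (-2)*a1*b0^2*b1 + (-1)*a1*b0^4 + (-1)*a1^2*b1 +
      (-1)*a1^2*b0^2 + (-1)*a0^2*b1^2 + (-2)*a0^2*b0^2*b1 + (-1)*a0^2*b0^4 +
      (-2)*a0^2*a1*b1 + (-2)*a0^2*a1*b0^2 + (-1)*a0^2*a1^2 + a0^3*b2 +
      a0^3*b0^3 + a0^3*a2 + (-1)*a0^4*b1 + (-1)*a0^4*b0^2 + (-1)*a0^4*a1),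
      by ring⟩
  · rintro p ⟨a0, a1, a2, rfl⟩
    refine ⟨0, -(a0^2 + a1), a0^3 + a2, ?_⟩
    rw [← map_neg, Ideal.Quotient.mk_eq_mk_iff_sub_mem, Ideal.mem_span_singleton]
    exact ⟨-(a2^2 + a0^2*a1^2 + a0^3*a2 + a0^4*a1 + a0^6), by ring⟩
end

section
/- Let R be a commutative ring with unity. For every b ∈ R, the element 6b is a sum of traces of sixth powers of matrices in M_2(R). Explicitly, 6b = Tr([[1,-b],[-1,0]]^6) + Tr([[0,b],[-1,0]]^6) + 2·Tr([[-1,b^2-1],[1,0]]^6) + Tr([[-b,b^2-1],[-1,0]]^6) + 3·Tr([[0,b^2],[-1,0]]^6) + 4·Tr([[0,1],[-1,0]]^6) + Tr([[1,0],[-1,0]]^6). -/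
theorem six_b_sum_of_traces_of_sixth_powers (R : Type*) [CommRing R] (b : R) :
    6 * b =
      Matrix.trace ((!![1, -b; -1, 0] : Matrix (Fin 2) (Fin 2) R) ^ 6)
      + Matrix.trace ((!![0, b; -1, 0] : Matrix (Fin 2) (Fin 2) R) ^ 6)
      + 2 * Matrix.trace ((!![-1, b ^ 2 - 1; 1, 0] : Matrix (Fin 2) (Fin 2) R) ^ 6)
      + Matrix.trace ((!![-b, b ^ 2 - 1; -1, 0] : Matrix (Fin 2) (Fin 2) R) ^ 6)
      + 3 * Matrix.trace ((!![0, b ^ 2; -1, 0] : Matrix (Fin 2) (Fin 2) R) ^ 6)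
      + 4 * Matrix.trace ((!![0, 1; -1, 0] : Matrix (Fin 2) (Fin 2) R) ^ 6)
      + Matrix.trace ((!![1, 0; -1, 0] : Matrix (Fin 2) (Fin 2) R) ^ 6) := by
  have h6 : ∀ M : Matrix (Fin 2) (Fin 2) R, M ^ 6 = M * M * M * M * M * M := by
    intro M; rw [pow_succ, pow_succ, pow_succ, pow_succ, pow_succ, pow_one]
  simp only [h6]
  simp [Matrix.trace_fin_two, Matrix.mul_fin_two]
  ring
end

section
/- Let R be a commutative ring with unity. A matrix M ∈ M_2(R) is a sum of sixth powers of matrices in M_2(R) if and only if there exist x_0, x_1, x_2 ∈ R with Tr M ≡ x_0^6 - 2x_1^3 + 3x_2^2 (mod 6R). -/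
open Matrix

section Aux

variable {R : Type*} [CommRing R]

private abbrev IsS6 (M : Matrix (Fin 2) (Fin 2) R) : Prop :=
  ∃ (r : ℕ) (Ms : Fin r → Matrix (Fin 2) (Fin 2) R), M = ∑ i, (Ms i) ^ 6

private lemma isS6_pow (B : Matrix (Fin 2) (Fin 2) R) : IsS6 (B ^ 6) :=
  ⟨1, ![B], by simp⟩

private lemma isS6_add {M N : Matrix (Fin 2) (Fin 2) R} (hM : IsS6 M) (hN : IsS6 N) :
    IsS6 (M + N) := by
  obtain ⟨m, A, rfl⟩ := hM
  obtain ⟨n, B, rfl⟩ := hN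
  refine ⟨m + n, Fin.append A B, ?_⟩
  rw [Fin.sum_univ_add]
  simp [Fin.append_left, Fin.append_right]

private lemma isS6_of_eq {M N : Matrix (Fin 2) (Fin 2) R} (h : IsS6 N) (e : M = N) :
    IsS6 M := e ▸ h

private lemma pow6_idem {X : Matrix (Fin 2) (Fin 2) R} (h : X * X = X) : X ^ 6 = X := by
  have h3 : X ^ 3 = X := by rw [pow_succ, pow_two, h, h]
  rw [show (6 : ℕ) = 3 * 2 from rfl, pow_mul, h3, pow_two, h]

private lemma pow6_negone {X : Matrix (Fin 2) (Fin 2) R} (h : X * X = -1) : X ^ 6 = -1 := by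
  rw [show (6 : ℕ) = 2 * 3 from rfl, pow_mul, pow_two, h]
  exact Odd.neg_one_pow ⟨1, rfl⟩

private lemma isS6_E12 (x : R) : IsS6 !![0, x; 0, 0] := by
  have h1 : (!![1, x; 0, 0] : Matrix (Fin 2) (Fin 2) R) ^ 6 = !![1, x; 0, 0] :=
    pow6_idem (by ext i j; fin_cases i <;> fin_cases j <;>
      simp [Matrix.mul_apply, Fin.sum_univ_two])
  have h2 : (!![0, -1; 1, 0] : Matrix (Fin 2) (Fin 2) R) ^ 6 = -1 :=
    pow6_negone (by ext i j; fin_cases i <;> fin_cases j <;>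
      simp [Matrix.mul_apply, Fin.sum_univ_two, Matrix.one_apply])
  have h3 : (!![0, 0; 0, 1] : Matrix (Fin 2) (Fin 2) R) ^ 6 = !![0, 0; 0, 1] :=
    pow6_idem (by ext i j; fin_cases i <;> fin_cases j <;>
      simp [Matrix.mul_apply, Fin.sum_univ_two])
  refine isS6_of_eq (isS6_add (isS6_add (isS6_pow !![1, x; 0, 0])
    (isS6_pow !![0, -1; 1, 0])) (isS6_pow !![0, 0; 0, 1])) ?_
  rw [h1, h2, h3]
  ext i j; fin_cases i <;> fin_cases j <;>
    simp [Matrix.add_apply, Matrix.neg_apply, Matrix.one_apply]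

private lemma isS6_E21 (y : R) : IsS6 !![0, 0; y, 0] := by
  have h1 : (!![0, 0; y, 1] : Matrix (Fin 2) (Fin 2) R) ^ 6 = !![0, 0; y, 1] :=
    pow6_idem (by ext i j; fin_cases i <;> fin_cases j <;>
      simp [Matrix.mul_apply, Fin.sum_univ_two])
  have h2 : (!![0, -1; 1, 0] : Matrix (Fin 2) (Fin 2) R) ^ 6 = -1 :=
    pow6_negone (by ext i j; fin_cases i <;> fin_cases j <;>
      simp [Matrix.mul_apply, Fin.sum_univ_two, Matrix.one_apply])
  have h3 : (!![1, 0; 0, 0] : Matrix (Fin 2) (Fin 2) R) ^ 6 = !![1, 0; 0, 0] :=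
    pow6_idem (by ext i j; fin_cases i <;> fin_cases j <;>
      simp [Matrix.mul_apply, Fin.sum_univ_two])
  refine isS6_of_eq (isS6_add (isS6_add (isS6_pow !![0, 0; y, 1])
    (isS6_pow !![0, -1; 1, 0])) (isS6_pow !![1, 0; 0, 0])) ?_
  rw [h1, h2, h3]
  ext i j; fin_cases i <;> fin_cases j <;>
    simp [Matrix.add_apply, Matrix.neg_apply, Matrix.one_apply]

private lemma isS6_Na (a : R) : IsS6 !![a, 1; -a ^ 2, -a] := by
  have h1 : (!![1 + a, 1; -a - a ^ 2, -a] : Matrix (Fin 2) (Fin 2) R) ^ 6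
      = !![1 + a, 1; -a - a ^ 2, -a] :=
    pow6_idem (by ext i j; fin_cases i <;> fin_cases j <;>
      (simp [Matrix.mul_apply, Fin.sum_univ_two]; try ring))
  have h2 : (!![-a, -1; 1 + a ^ 2, a] : Matrix (Fin 2) (Fin 2) R) ^ 6 = -1 :=
    pow6_negone (by ext i j; fin_cases i <;> fin_cases j <;>
      (simp [Matrix.mul_apply, Fin.sum_univ_two, Matrix.one_apply]; try ring))
  have h3 : (!![0, 0; a, 1] : Matrix (Fin 2) (Fin 2) R) ^ 6 = !![0, 0; a, 1] :=
    pow6_idem (by ext i j; fin_cases i <;> fin_cases j <;>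
      simp [Matrix.mul_apply, Fin.sum_univ_two])
  refine isS6_of_eq (isS6_add (isS6_add (isS6_pow !![1 + a, 1; -a - a ^ 2, -a])
    (isS6_pow !![-a, -1; 1 + a ^ 2, a])) (isS6_pow !![0, 0; a, 1])) ?_
  rw [h1, h2, h3]
  ext i j; fin_cases i <;> fin_cases j <;>
    (simp [Matrix.add_apply, Matrix.neg_apply, Matrix.one_apply]; try ring)

private lemma isS6_of_trace_zero {A : Matrix (Fin 2) (Fin 2) R} (h : trace A = 0) :
    IsS6 A := by
  rw [trace_fin_two] at h
  have h11 : A 1 1 = -(A 0 0) := by linear_combination h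
  refine isS6_of_eq (isS6_add (isS6_add (isS6_Na (A 0 0)) (isS6_E12 (A 0 1 - 1)))
    (isS6_E21 (A 1 0 + (A 0 0) ^ 2))) ?_
  ext i j; fin_cases i <;> fin_cases j <;>
    (simp [Matrix.add_apply, h11]; try ring)

private lemma trace_pow_six (B : Matrix (Fin 2) (Fin 2) R) :
    trace (B ^ 6) = (B 0 0 + B 1 1) ^ 6
      - 6 * (B 0 0 + B 1 1) ^ 4 * (B 0 0 * B 1 1 - B 0 1 * B 1 0)
      + 9 * (B 0 0 + B 1 1) ^ 2 * (B 0 0 * B 1 1 - B 0 1 * B 1 0) ^ 2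
      - 2 * (B 0 0 * B 1 1 - B 0 1 * B 1 0) ^ 3 := by
  simp only [show (6 : ℕ) = 5 + 1 from rfl, pow_succ, pow_zero, one_mul,
    trace_fin_two, Matrix.mul_apply, Fin.sum_univ_two]
  ring

private def Fp (t d : R) : R := t ^ 6 - 6 * t ^ 4 * d + 9 * t ^ 2 * d ^ 2 - 2 * d ^ 3

private lemma isS6_trace_list (l : List (R × R)) :
    ∃ N : Matrix (Fin 2) (Fin 2) R, IsS6 N ∧ trace N = (l.map fun p => Fp p.1 p.2).sum := by
  induction l with
  | nil => exact ⟨0, ⟨0, ![], by simp⟩, by simp⟩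
  | cons p l ih =>
    obtain ⟨N, hN, ht⟩ := ih
    refine ⟨!![0, -p.2; 1, p.1] ^ 6 + N, isS6_add (isS6_pow _) hN, ?_⟩
    rw [trace_add, ht, trace_pow_six]
    simp only [List.map_cons, List.sum_cons, Fp]
    simp
    try ring

end Aux

theorem sum_of_sixth_powers_iff_two_by_two (R : Type*) [CommRing R]
    (M : Matrix (Fin 2) (Fin 2) R) :
    (∃ (r : ℕ) (Ms : Fin r → Matrix (Fin 2) (Fin 2) R), M = ∑ i, (Ms i) ^ 6) ↔
      ∃ x₀ x₁ x₂ : R,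
        Matrix.trace M - (x₀ ^ 6 - 2 * x₁ ^ 3 + 3 * x₂ ^ 2)
          ∈ Ideal.span ({6} : Set R) := by
  constructor
  · rintro ⟨r, Ms, rfl⟩
    rw [trace_sum]
    refine Finset.sum_induction _
      (fun y => ∃ x₀ x₁ x₂ : R, y - (x₀ ^ 6 - 2 * x₁ ^ 3 + 3 * x₂ ^ 2) ∈ Ideal.span {6})
      ?_ ?_ ?_
    · rintro y y' ⟨a, b, c, hy⟩ ⟨d, e, f, hy'⟩
      obtain ⟨k, hk⟩ := Ideal.mem_span_singleton'.1 hy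
      obtain ⟨k', hk'⟩ := Ideal.mem_span_singleton'.1 hy'
      refine ⟨0, a ^ 2 + b + (d ^ 2 + e), a ^ 3 + c + (d ^ 3 + f),
        Ideal.mem_span_singleton'.2 ⟨k + k' +
          ((a ^ 2 + b) * (d ^ 2 + e) * ((a ^ 2 + b) + (d ^ 2 + e))
            - (a ^ 3 + c) * (d ^ 3 + f)
            + (a ^ 4 * b + a ^ 2 * b ^ 2 - a ^ 3 * c)
            + (d ^ 4 * e + d ^ 2 * e ^ 2 - d ^ 3 * f)), ?_⟩⟩
      linear_combination hk + hk'
    · exact ⟨0, 0, 0, by norm_num⟩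
    · intro i _
      refine ⟨Ms i 0 0 + Ms i 1 1,
        Ms i 0 0 * Ms i 1 1 - Ms i 0 1 * Ms i 1 0,
        (Ms i 0 0 + Ms i 1 1) * (Ms i 0 0 * Ms i 1 1 - Ms i 0 1 * Ms i 1 0),
        Ideal.mem_span_singleton'.2
          ⟨(Ms i 0 0 + Ms i 1 1) ^ 2 * (Ms i 0 0 * Ms i 1 1 - Ms i 0 1 * Ms i 1 0) ^ 2
            - (Ms i 0 0 + Ms i 1 1) ^ 4 * (Ms i 0 0 * Ms i 1 1 - Ms i 0 1 * Ms i 1 0), ?_⟩⟩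
      rw [trace_pow_six]
      ring
  · rintro ⟨x₀, x₁, x₂, hx⟩
    obtain ⟨g, hg⟩ := Ideal.mem_span_singleton'.1 hx
    set s : R := g + x₂ - x₂ ^ 2 with hs
    obtain ⟨N, hN, ht⟩ := isS6_trace_list
      ([(x₀, 0), (0, x₁),
        (1, x₂), (0, -x₂), (0, 1), (1, 0),
        (1, s), (0, -s), (0, 1), (1, 0),
        (1, s), (0, -s), (0, 1), (1, 0),
        (1, s + 1), (0, -(s + 1)), (0, 1), (1, 0),
        (1, 0), (0, 1), (0, 1),
        (1, -s), (0, s), (0, 1), (1, 0),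
        (0, 3 * s ^ 2 - 1), (0, 3 * s ^ 2 + 1), (0, -(3 * s ^ 2)), (0, -(3 * s ^ 2))]
        : List (R × R))
    have htr : trace N = trace M := by
      rw [ht]
      simp only [List.map_cons, List.map_nil, List.sum_cons, List.sum_nil, Fp, hs]
      linear_combination hg
    have h0 : trace (M - N) = 0 := by rw [trace_sub, htr, sub_self]
    exact isS6_of_eq (isS6_add (isS6_of_trace_zero h0) hN) (by rw [sub_add_cancel])
end

section
/- Let R be a commutative ring with unity and n ≥ 2. If M ∈ M_n(R) satisfies Tr M ≡ x_0^6 - 2x_1^3 + 3x_2^2 (mod 6R) for some x_0, x_1, x_2 ∈ R, then M is a sum of sixth powers of matrices in M_n(R). -/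
/-!
If `P * Q = 1`, then `A ↦ Q * A * P` is multiplicative and preserves traces, so it maps sums of
`k`-th powers (`k ≠ 0`) to sums of `k`-th powers; with `P`, `Q` built from two coordinates
`i ≠ j` it places a `2 × 2` matrix in rows and columns `i, j` of a larger one. A trace-zero
`2 × 2` matrix is a sum of four idempotents (trace `1`, determinant `0`) and twice
`-1 = !![0, 1; -1, 0] ^ 6`. The matrix units `E i j` (`i ≠ j`) and `E i i - E j j` span the
trace-zero matrices, so every trace-zero matrix is a sum of sixth powers, and it remains to
realise `trace M` as the trace of a sum of sixth powers of `2 × 2` matrices. The sixth powers of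
`!![x, 0; 0, 0]`, `!![0, 1; -d, 0]` and `!![0, 1; -d, 1]` have traces `x ^ 6`, `-2 d ^ 3` and
`(1 - 3 d) ^ 2 - 2 d ^ 3`; sums of these give all of `6 R`, and then every
`x₀ ^ 6 - 2 x₁ ^ 3 + 3 x₂ ^ 2 + 6 u`.
-/

open Matrix AddSubmonoid

def AddSubmonoid.sumPow (S : Type*) [Semiring S] (k : ℕ) : AddSubmonoid S :=
  closure (Set.range (· ^ k))

namespace AddSubmonoid

variable {S : Type*} [Semiring S] {k : ℕ}

theorem pow_mem_sumPow (a : S) : a ^ k ∈ sumPow S k :=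
  subset_closure ⟨a, rfl⟩

theorem _root_.IsIdempotentElem.mem_sumPow {a : S} (ha : IsIdempotentElem a) (hk : k ≠ 0) :
    a ∈ sumPow S k := by
  obtain ⟨m, rfl⟩ := Nat.exists_eq_succ_of_ne_zero hk
  simpa only [ha.pow_succ_eq] using pow_mem_sumPow a (k := m + 1)

theorem exists_fin_sum_pow_of_mem_sumPow {x : S} (hx : x ∈ sumPow S k) :
    ∃ (r : ℕ) (f : Fin r → S), x = ∑ i, f i ^ k := by
  induction hx using closure_induction with
  | mem _ hx =>
    obtain ⟨a, rfl⟩ := hx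
    exact ⟨1, fun _ ↦ a, by simp⟩
  | zero => exact ⟨0, Fin.elim0, by simp⟩
  | add _ _ _ _ hx hy =>
    obtain ⟨r, f, rfl⟩ := hx
    obtain ⟨s, g, rfl⟩ := hy
    exact ⟨r + s, Fin.append f g, by simp [Fin.sum_univ_add]⟩

end AddSubmonoid

namespace Matrix

variable {R ι κ : Type*} [Fintype ι] [Fintype κ] [DecidableEq ι] [DecidableEq κ] {k : ℕ}

section Semiring

variable [Semiring R] {P : Matrix ι κ R} {Q : Matrix κ ι R}

theorem mul_mul_pow_succ_of_mul_eq_one (hPQ : P * Q = 1) (A : Matrix ι ι R) (m : ℕ) :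
    (Q * A * P) ^ (m + 1) = Q * A ^ (m + 1) * P := by
  induction m with
  | zero => simp
  | succ m ih =>
    rw [pow_succ, ih, pow_succ A (m + 1)]
    simp only [Matrix.mul_assoc]
    rw [← Matrix.mul_assoc P, hPQ, Matrix.one_mul]

theorem mul_mul_mem_sumPow_of_mul_eq_one (hPQ : P * Q = 1) (hk : k ≠ 0) {A : Matrix ι ι R}
    (hA : A ∈ sumPow _ k) : Q * A * P ∈ sumPow _ k := by
  induction hA using closure_induction with
  | mem _ hA =>
    obtain ⟨B, rfl⟩ := hA
    obtain ⟨m, rfl⟩ := Nat.exists_eq_succ_of_ne_zero hk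
    rw [← mul_mul_pow_succ_of_mul_eq_one hPQ]
    exact pow_mem_sumPow _
  | zero => simp [zero_mem]
  | add _ _ _ _ hA hB =>
    rw [Matrix.mul_add, Matrix.add_mul]
    exact add_mem hA hB

omit [Fintype ι] in
theorem submatrix_one_mul_submatrix_one {e : ι → κ} (he : Function.Injective e) :
    (1 : Matrix κ κ R).submatrix e id * (1 : Matrix κ κ R).submatrix id e = 1 := by
  rw [← submatrix_mul _ _ _ _ _ Function.bijective_id, Matrix.one_mul, submatrix_one _ he]

omit [Fintype κ] in
theorem submatrix_one_mul_single_mul_submatrix_one (e : ι → κ) (a b : ι) (x : R) :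
    (1 : Matrix κ κ R).submatrix id e * single a b x * (1 : Matrix κ κ R).submatrix e id =
      single (e a) (e b) x := by
  ext p q
  rw [mul_apply, Fintype.sum_eq_single b, mul_apply, Fintype.sum_eq_single a]
  · by_cases hp : p = e a <;> by_cases hq : q = e b <;> simp [one_apply, hp, hq, eq_comm]
  · intro s hs
    simp [Ne.symm hs]
  · intro r hr
    simp [mul_apply, Ne.symm hr]

end Semiring

section Ring

variable [Ring R]

theorem mem_sumPow_of_trace_eq_zero (hk : k ≠ 0)
    (h₂ : ∀ A : Matrix (Fin 2) (Fin 2) R, trace A = 0 → A ∈ sumPow _ k)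
    {X : Matrix κ κ R} (hX : trace X = 0) : X ∈ sumPow _ k := by
  rcases isEmpty_or_nonempty κ with _ | ⟨⟨i₀⟩⟩
  · rw [Subsingleton.elim X 0]
    exact zero_mem _
  have hpair : ∀ {i j : κ}, i ≠ j → ∀ A : Matrix (Fin 2) (Fin 2) R, A ∈ sumPow _ k →
      (1 : Matrix κ κ R).submatrix id ![i, j] * A * (1 : Matrix κ κ R).submatrix ![i, j] id ∈
        sumPow _ k := fun hij _ ↦
    mul_mul_mem_sumPow_of_mul_eq_one (submatrix_one_mul_submatrix_one (by
      simp [Function.Injective, Fin.forall_fin_two, hij, hij.symm])) hk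
  have hsingle : ∀ i j x,
      single i j x - single i₀ i₀ (if i = j then x else 0) ∈ sumPow (Matrix κ κ R) k := by
    intro i j x
    by_cases hij : i = j
    · subst hij
      by_cases hi : i₀ = i
      · simp [hi, zero_mem]
      have := hpair hi (single 1 1 x - single 0 0 x) (h₂ _ (by simp [trace_sub]))
      rw [Matrix.mul_sub, Matrix.sub_mul, submatrix_one_mul_single_mul_submatrix_one,
        submatrix_one_mul_single_mul_submatrix_one] at this
      simpa using this
    · have := hpair hij (single 0 1 x) (h₂ _ (trace_single_eq_of_ne _ _ _ (by simp)))
      rw [submatrix_one_mul_single_mul_submatrix_one] at this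
      simpa [hij] using this
  have hdiag :
      ∑ i, ∑ j, single i₀ i₀ (if i = j then X i j else 0) = single i₀ i₀ (trace X) := by
    simp_rw [← singleAddMonoidHom_apply, ← map_sum, Finset.sum_ite_eq, Finset.mem_univ, if_true]
    rfl
  have hdecomp :
      X = ∑ i, ∑ j, (single i j (X i j) - single i₀ i₀ (if i = j then X i j else 0)) := by
    simp only [Finset.sum_sub_distrib, hdiag, hX, single_zero, sub_zero, ← matrix_eq_sum_single]
  rw [hdecomp]
  exact sum_mem fun i _ ↦ sum_mem fun j _ ↦ hsingle i j _

end Ring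

section CommSemiring

variable [CommSemiring R] {P : Matrix ι κ R} {Q : Matrix κ ι R}

omit [DecidableEq κ] in
theorem trace_mul_mul_of_mul_eq_one (hPQ : P * Q = 1) (A : Matrix ι ι R) :
    trace (Q * A * P) = trace A := by
  rw [trace_mul_cycle, hPQ, Matrix.one_mul]

theorem map_trace_sumPow_le {e : ι → κ} (he : Function.Injective e) (hk : k ≠ 0) :
    (sumPow (Matrix ι ι R) k).map (traceAddMonoidHom ι R) ≤
      (sumPow (Matrix κ κ R) k).map (traceAddMonoidHom κ R) := by
  rintro _ ⟨A, hA, rfl⟩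
  have hPQ := submatrix_one_mul_submatrix_one he (R := R)
  exact ⟨_, mul_mul_mem_sumPow_of_mul_eq_one hPQ hk hA, trace_mul_mul_of_mul_eq_one hPQ A⟩

end CommSemiring

section CommRing

variable [CommRing R]

theorem isIdempotentElem_fin_two {p q r s : R} (htr : p + s = 1) (hdet : p * s = q * r) :
    IsIdempotentElem !![p, q; r, s] := by
  rw [IsIdempotentElem, mul_fin_two, ← Matrix.ext_iff]
  simp only [Fin.forall_fin_two, of_apply, cons_val_zero, cons_val_one, cons_val_fin_one]
  refine ⟨⟨?_, ?_⟩, ?_, ?_⟩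
  · linear_combination p * htr - hdet
  · linear_combination q * htr
  · linear_combination r * htr
  · linear_combination s * htr - hdet

theorem neg_one_mem_sumPow_six_fin_two : (-1 : Matrix (Fin 2) (Fin 2) R) ∈ sumPow _ 6 := by
  have h : !![0, 1; -1, 0] ^ 6 = (-1 : Matrix (Fin 2) (Fin 2) R) := by
    simp only [pow_succ, pow_zero, one_fin_two, mul_fin_two]
    ext i j
    fin_cases i <;> fin_cases j <;> simp
  exact h ▸ pow_mem_sumPow _

theorem mem_sumPow_six_fin_two_of_trace_eq_zero {A : Matrix (Fin 2) (Fin 2) R}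
    (hA : trace A = 0) : A ∈ sumPow _ 6 := by
  obtain ⟨a, b, c, rfl⟩ : ∃ a b c : R, A = !![a, b; c, -a] :=
    ⟨A 0 0, A 0 1, A 1 0, by
      rw [trace_fin_two] at hA
      ext i j
      fin_cases i <;> fin_cases j <;> simp [eq_neg_of_add_eq_zero_right hA]⟩
  have hsum : !![a, b; c, -a] = !![a + 1, 1; -(a * (a + 1)), -a] + !![0, b - 1; 0, 1] +
      !![1, 0; c + a * (a + 1), 0] + !![0, 0; 0, 1] + -1 + -1 := by
    ext i j
    fin_cases i <;> fin_cases j <;> simp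
  have idem {p q r s : R} (htr : p + s = 1) (hdet : p * s = q * r) :
      !![p, q; r, s] ∈ sumPow _ 6 :=
    (isIdempotentElem_fin_two htr hdet).mem_sumPow (by norm_num)
  rw [hsum]
  refine add_mem (add_mem (add_mem (add_mem (add_mem ?_ ?_) ?_) ?_) ?_) ?_
  · exact idem (by ring) (by ring)
  · exact idem (by ring) (by ring)
  · exact idem (by ring) (by ring)
  · exact idem (by ring) (by ring)
  all_goals exact neg_one_mem_sumPow_six_fin_two

theorem mem_map_trace_sumPow_six_fin_two (x₀ x₁ x₂ u : R) :
    x₀ ^ 6 - 2 * x₁ ^ 3 + 3 * x₂ ^ 2 + 6 * u ∈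
      (sumPow (Matrix (Fin 2) (Fin 2) R) 6).map (traceAddMonoidHom (Fin 2) R) := by
  set T := (sumPow (Matrix (Fin 2) (Fin 2) R) 6).map (traceAddMonoidHom (Fin 2) R)
  have trace_pow_mem {A : Matrix (Fin 2) (Fin 2) R} {t : R} (ht : trace (A ^ 6) = t) : t ∈ T :=
    ht ▸ mem_map_of_mem _ (pow_mem_sumPow A)
  have hD (x : R) : x ^ 6 ∈ T := trace_pow_mem (A := !![x, 0; 0, 0]) (by
    simp only [pow_succ, pow_zero, one_fin_two, mul_fin_two, trace_fin_two_of]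
    ring)
  have hK (d : R) : -2 * d ^ 3 ∈ T := trace_pow_mem (A := !![0, 1; -d, 0]) (by
    simp only [pow_succ, pow_zero, one_fin_two, mul_fin_two, trace_fin_two_of]
    ring)
  have hC (d : R) : (1 - 3 * d) ^ 2 - 2 * d ^ 3 ∈ T := trace_pow_mem (A := !![0, 1; -d, 1]) (by
    simp only [pow_succ, pow_zero, one_fin_two, mul_fin_two, trace_fin_two_of]
    ring)
  have h6 (s : R) : 6 * s ∈ T := by
    convert add_mem (add_mem (add_mem (add_mem (add_mem (add_mem (add_mem (hC s) (hC (-s)))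
      (hK (s + 1))) (hK (1 - s))) (hK (1 - s))) (hK s)) (hK (-1))) (hK (-1)) using 1
    ring
  convert add_mem (add_mem (add_mem (add_mem (add_mem (hD x₀) (hK x₁)) (hC x₂)) (hK (-x₂)))
    (nsmul_mem (hC 0) 5)) (h6 (x₂ - x₂ ^ 2 + u - 1)) using 1
  ring

end CommRing

end Matrix

theorem sum_of_sixth_powers_n_by_n (R : Type*) [CommRing R] (n : ℕ) (hn : 2 ≤ n)
    (M : Matrix (Fin n) (Fin n) R)
    (h : ∃ x₀ x₁ x₂ : R,
      Matrix.trace M - (x₀ ^ 6 - 2 * x₁ ^ 3 + 3 * x₂ ^ 2)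
        ∈ Ideal.span ({6} : Set R)) :
    ∃ (r : ℕ) (Ms : Fin r → Matrix (Fin n) (Fin n) R), M = ∑ i, (Ms i) ^ 6 := by
  obtain ⟨x₀, x₁, x₂, hM⟩ := h
  obtain ⟨u, hu⟩ := Ideal.mem_span_singleton'.mp hM
  obtain ⟨W, hW, hWM⟩ : trace M ∈ (sumPow _ 6).map (traceAddMonoidHom (Fin n) R) := by
    refine map_trace_sumPow_le (Fin.castLE_injective hn) (by norm_num) ?_
    convert mem_map_trace_sumPow_six_fin_two x₀ x₁ x₂ u using 1
    linear_combination -hu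
  have hMW : M - W ∈ sumPow _ 6 :=
    mem_sumPow_of_trace_eq_zero (by norm_num) (fun _ ↦ mem_sumPow_six_fin_two_of_trace_eq_zero)
      (by simp [trace_sub, ← hWM])
  exact exists_fin_sum_pow_of_mem_sumPow (sub_add_cancel M W ▸ add_mem hMW hW)
end

section
/- Let R be a commutative ring with unity, p a prime, and s ≥ 1 an integer. The set W(p,s,R) = { x_0^{p^s} + p·x_1^{p^{s-1}} + ... + p^s·x_s : x_0,...,x_s ∈ R } is closed under addition and subtraction. -/
/-! The set `W(p, s, R)` is the image of the `s`-th ghost component `𝕎 R →+* R`, whose value on a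
Witt vector `x` is `x₀ ^ p ^ s + p x₁ ^ p ^ (s - 1) + ⋯ + p ^ s xₛ`; the image of a ring
homomorphism is a subring. -/

open WittVector

section

variable {p : ℕ} [Fact p.Prime] {R : Type*} [CommRing R]

lemma WittVector.ghostComponent_eq_sum_fin (s : ℕ) (v : WittVector p R) :
    ghostComponent s v = ∑ i : Fin (s + 1), (p : R) ^ (i : ℕ) * v.coeff i ^ p ^ (s - i) := by
  rw [ghostComponent_apply, aeval_wittPolynomial,
    Fin.sum_univ_eq_sum_range (fun i => (p : R) ^ i * v.coeff i ^ p ^ (s - i))]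

lemma WittVector.range_ghostComponent (s : ℕ) :
    Set.range (ghostComponent s : WittVector p R →+* R) =
      {w | ∃ x : Fin (s + 1) → R,
        w = ∑ i : Fin (s + 1), (p : R) ^ (i : ℕ) * x i ^ p ^ (s - (i : ℕ))} := by
  ext w
  constructor
  · rintro ⟨v, rfl⟩
    exact ⟨fun i => v.coeff i, ghostComponent_eq_sum_fin s v⟩
  · rintro ⟨x, rfl⟩
    refine ⟨WittVector.mk p fun n => if h : n < s + 1 then x ⟨n, h⟩ else 0, ?_⟩
    simp [ghostComponent_eq_sum_fin, WittVector.coeff_mk, Fin.is_le]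

end

theorem witt_set_closed_general (R : Type*) [CommRing R] (p : ℕ) (hp : p.Prime)
    (s : ℕ) :
    ∀ a ∈ {w : R | ∃ x : Fin (s + 1) → R,
        w = ∑ i : Fin (s + 1), (p : R) ^ (i : ℕ) * (x i) ^ (p ^ (s - (i : ℕ)))},
    ∀ b ∈ {w : R | ∃ x : Fin (s + 1) → R,
        w = ∑ i : Fin (s + 1), (p : R) ^ (i : ℕ) * (x i) ^ (p ^ (s - (i : ℕ)))},
      (a + b) ∈ {w : R | ∃ x : Fin (s + 1) → R,
        w = ∑ i : Fin (s + 1), (p : R) ^ (i : ℕ) * (x i) ^ (p ^ (s - (i : ℕ)))} ∧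
      (a - b) ∈ {w : R | ∃ x : Fin (s + 1) → R,
        w = ∑ i : Fin (s + 1), (p : R) ^ (i : ℕ) * (x i) ^ (p ^ (s - (i : ℕ)))} := by
  have : Fact p.Prime := ⟨hp⟩
  simp only [← range_ghostComponent (p := p), ← RingHom.coe_range, SetLike.mem_coe]
  exact fun a ha b hb => ⟨add_mem ha hb, sub_mem ha hb⟩

theorem witt_set_closed (R : Type*) [CommRing R] (p : ℕ) (hp : p.Prime)
    (s : ℕ) (hs : 1 ≤ s) :
    ∀ a ∈ {w : R | ∃ x : Fin (s + 1) → R,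
        w = ∑ i : Fin (s + 1), (p : R) ^ (i : ℕ) * (x i) ^ (p ^ (s - (i : ℕ)))},
    ∀ b ∈ {w : R | ∃ x : Fin (s + 1) → R,
        w = ∑ i : Fin (s + 1), (p : R) ^ (i : ℕ) * (x i) ^ (p ^ (s - (i : ℕ)))},
      (a + b) ∈ {w : R | ∃ x : Fin (s + 1) → R,
        w = ∑ i : Fin (s + 1), (p : R) ^ (i : ℕ) * (x i) ^ (p ^ (s - (i : ℕ)))} ∧
      (a - b) ∈ {w : R | ∃ x : Fin (s + 1) → R,
        w = ∑ i : Fin (s + 1), (p : R) ^ (i : ℕ) * (x i) ^ (p ^ (s - (i : ℕ)))} :=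
  witt_set_closed_general R p hp s
end

section
/- Let R be a commutative ring with unity and n ≥ 2. For every M ∈ M_n(R) and prime p and integer s ≥ 1, there exist x_0, ..., x_s ∈ R such that Tr(M^{p^s}) = x_0^{p^s} + p·x_1^{p^{s-1}} + ... + p^s·x_s. -/
/-!
Pass to the generic matrix `X = mvPolynomialX ι ι ℤ` over `B = ℤ[X (i, j)]`, on which
`φ = expand p` is a ring endomorphism with `φ b ≡ b ^ p [mod p]`. Write `Tr (X ^ N)` as a sum over
closed walks `ZMod N → ι` and let `ZMod N`, `N = p ^ (k + 1)`, rotate them. Every nonzero subgroup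
of `ZMod (p ^ (k + 1))` contains `p ^ k`, so a walk is either `p ^ k`-periodic or has a free orbit.
The periodic walks are walks of length `p ^ k` traversed `p` times and contribute
`Tr ((X.map (· ^ p)) ^ p ^ k) = φ (Tr (X ^ p ^ k))`; each free orbit contributes a multiple of
`p ^ (k + 1)`. The congruences `Tr (X ^ p ^ (k + 1)) ≡ φ (Tr (X ^ p ^ k)) [mod p ^ (k + 1)]` then
produce the `x i` one at a time, and evaluating at `M` gives the theorem.
-/

open Finset

theorem pow_succ_dvd_pow_mul_sub_pow {B : Type*} [CommRing B] {p i k : ℕ} {u v : B}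
    (h : (p : B) ∣ u - v ^ p) (hi : i ≤ k) :
    (p : B) ^ (k + 1) ∣ (p : B) ^ i * (u ^ p ^ (k - i) - v ^ p ^ (k + 1 - i)) := by
  have h' := dvd_sub_pow_of_dvd_sub h (k - i)
  rw [← pow_mul, ← pow_succ'] at h'
  rw [show k + 1 - i = k - i + 1 by omega, show k + 1 = i + (k - i + 1) by omega, pow_add]
  exact mul_dvd_mul_left _ h'

theorem exists_eq_sum_pow_of_frobenius_congr {B F : Type*} [CommRing B] [FunLike F B B]
    [RingHomClass F B B] {p : ℕ} (φ : F)
    (hφ : ∀ b, (p : B) ∣ φ b - b ^ p) (a : ℕ → B)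
    (ha : ∀ k, (p : B) ^ (k + 1) ∣ a (k + 1) - φ (a k)) (k : ℕ) :
    ∃ x : Fin (k + 1) → B, a k = ∑ i : Fin (k + 1), (p : B) ^ (i : ℕ) * x i ^ p ^ (k - i) := by
  induction k with
  | zero => exact ⟨fun _ => a 0, by simp⟩
  | succ k ih =>
    obtain ⟨x, hx⟩ := ih
    obtain ⟨c, hc⟩ : (p : B) ^ (k + 1) ∣
        a (k + 1) - ∑ i : Fin (k + 1), (p : B) ^ (i : ℕ) * x i ^ p ^ (k + 1 - i) := by
      have hφa : φ (a k) = ∑ i : Fin (k + 1), (p : B) ^ (i : ℕ) * φ (x i) ^ p ^ (k - i) := by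
        simp [hx, map_sum]
      have hsplit : a (k + 1) - ∑ i : Fin (k + 1), (p : B) ^ (i : ℕ) * x i ^ p ^ (k + 1 - i) =
          a (k + 1) - φ (a k) + ∑ i : Fin (k + 1),
            (p : B) ^ (i : ℕ) * (φ (x i) ^ p ^ (k - i) - x i ^ p ^ (k + 1 - i)) := by
        simp only [hφa, mul_sub, sum_sub_distrib]
        ring
      rw [hsplit]
      exact dvd_add (ha k) (dvd_sum fun i _ =>
        pow_succ_dvd_pow_mul_sub_pow (hφ (x i)) (Nat.le_of_lt_succ i.isLt))
    refine ⟨Fin.snoc x c, ?_⟩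
    rw [Fin.sum_univ_castSucc]
    simp only [Fin.snoc_castSucc, Fin.snoc_last, Fin.val_castSucc, Fin.val_last, Nat.sub_self,
      pow_zero, pow_one]
    linear_combination hc

theorem MvPolynomial.natCast_dvd_expand_sub_pow {σ : Type*} {p : ℕ} (hp : p.Prime)
    (f : MvPolynomial σ ℤ) : (p : MvPolynomial σ ℤ) ∣ expand p f - f ^ p := by
  have : Fact p.Prime := ⟨hp⟩
  rw [← map_natCast (C : ℤ →+* MvPolynomial σ ℤ),
    C_dvd_iff_map_hom_eq_zero (Int.castRingHom (ZMod p)) _ fun r => by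
      simp [ZMod.intCast_zmod_eq_zero_iff_dvd],
    map_sub, map_pow, map_expand, expand_zmod, sub_self]

theorem AddAction.card_dvd_sum_of_free {G X S : Type*} [AddGroup G] [Fintype G] [AddAction G X]
    [CommSemiring S] (t : X → S) (ht : ∀ (g : G) x, t (g +ᵥ x) = t x) (s : Finset X)
    (hs : ∀ (g : G), ∀ x ∈ s, g +ᵥ x ∈ s) (hfree : ∀ x ∈ s, ∀ g : G, g +ᵥ x = x → g = 0) :
    (Fintype.card G : S) ∣ ∑ x ∈ s, t x := by
  classical
  let q : X → orbitRel.Quotient G X := Quotient.mk _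
  rw [← sum_fiberwise_of_maps_to (g := q) fun x hx => mem_image_of_mem q hx]
  refine dvd_sum fun y hy => ?_
  obtain ⟨c, hc, rfl⟩ := mem_image.1 hy
  have horbit : {x ∈ s | q x = q c} = univ.image fun g : G => g +ᵥ c := by
    ext x
    simp only [mem_filter, mem_image, mem_univ, true_and, q, Quotient.eq, orbitRel_apply,
      mem_orbit_iff]
    exact ⟨And.right, fun ⟨g, hg⟩ => ⟨hg ▸ hs g c hc, g, hg⟩⟩
  have hinj : Set.InjOn (fun g : G => g +ᵥ c) (univ : Finset G) := fun g _ h _ hgh => by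
    have := hfree c hc (-h + g) (by rw [add_vadd, show g +ᵥ c = h +ᵥ c from hgh, neg_vadd_vadd])
    rwa [neg_add_eq_zero, eq_comm] at this
  rw [horbit, sum_image hinj, sum_congr rfl fun g _ => ht g c, sum_const, card_univ, nsmul_eq_mul]
  exact dvd_mul_right _ _

theorem ZMod.prod_comp_castHom {M : Type*} [CommMonoid M] {m N : ℕ} [NeZero m] [NeZero N]
    (h : m ∣ N) (F : ZMod m → M) :
    ∏ i : ZMod N, F (ZMod.castHom h (ZMod m) i) = ∏ j, F j ^ (N / m) := by
  set π := ZMod.castHom h (ZMod m)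
  have hsurj := ZMod.castHom_surjective h
  have hfiber : ∀ j, #{i | π i = j} = #{i | π i = 0} := fun j =>
    AddMonoidHom.card_fiber_eq_of_mem_range π.toAddMonoidHom (hsurj j) (hsurj 0)
  have hcard : m * #{i | π i = 0} = N := by
    have := card_eq_sum_card_fiberwise (f := π) (s := univ) (t := univ) fun _ _ => mem_univ _
    rw [sum_congr rfl fun j _ => hfiber j, sum_const, card_univ, card_univ, ZMod.card,
      ZMod.card, smul_eq_mul] at this
    exact this.symm
  rw [prod_comp, image_univ_of_surjective hsurj]
  refine prod_congr rfl fun j _ => ?_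
  rw [hfiber j, eq_comm, Nat.div_eq_of_eq_mul_right (Nat.pos_of_neZero m) hcard.symm]

theorem ZMod.natCast_prime_pow_mem_of_ne_bot {p k : ℕ} (hp : p.Prime)
    {H : AddSubgroup (ZMod (p ^ (k + 1)))} (hH : H ≠ ⊥) :
    ((p ^ k : ℕ) : ZMod (p ^ (k + 1))) ∈ H := by
  obtain ⟨a, haH, ha⟩ := H.bot_or_exists_ne_zero.resolve_left hH
  have : NeZero p := ⟨hp.ne_zero⟩
  obtain ⟨j, hj, hdj⟩ := (Nat.dvd_prime_pow hp).1 (Nat.gcd_dvd_right a.val (p ^ (k + 1)))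
  have hjk : j ≤ k := by
    refine Nat.le_of_lt_succ (lt_of_le_of_ne hj fun hjk => ha ?_)
    have hdvd : p ^ j ∣ a.val := hdj ▸ Nat.gcd_dvd_left a.val (p ^ (k + 1))
    rw [hjk] at hdvd
    exact (ZMod.val_eq_zero a).1 (Nat.eq_zero_of_dvd_of_lt hdvd (ZMod.val_lt a))
  -- Bézout for `gcd a.val (p ^ (k + 1)) = p ^ j`, read in `ZMod (p ^ (k + 1))`.
  have hbez : ((p ^ j : ℕ) : ZMod (p ^ (k + 1))) = a.val.gcdA (p ^ (k + 1)) • a := by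
    have h0 : (p : ZMod (p ^ (k + 1))) ^ (k + 1) = 0 := by
      exact_mod_cast ZMod.natCast_self (p ^ (k + 1))
    have := congrArg (Int.cast : ℤ → ZMod (p ^ (k + 1))) (Nat.gcd_eq_gcd_ab a.val (p ^ (k + 1)))
    simpa [hdj, h0, zsmul_eq_mul, mul_comm] using this
  rw [← Nat.pow_sub_mul_pow p hjk, Nat.cast_mul, ← nsmul_eq_mul, hbez]
  exact H.nsmul_mem (H.zsmul_mem haH _) _

namespace Matrix

variable {S ι : Type*} [CommSemiring S] [Fintype ι] [DecidableEq ι]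

theorem pow_succ_apply_eq_sum_prod (A : Matrix ι ι S) (m : ℕ) (i j : ι) :
    (A ^ (m + 1)) i j =
      ∑ g : Fin m → ι, ∏ t : Fin (m + 1),
        A ((Fin.cons i g : Fin (m + 1) → ι) t) ((Fin.snoc g j : Fin (m + 1) → ι) t) := by
  induction m generalizing i with
  | zero => simp [Fin.snoc]
  | succ m ih =>
    rw [pow_succ', mul_apply]
    simp_rw [ih, mul_sum]
    rw [← Fintype.sum_prod_type', ← (Fin.consEquiv fun _ => ι).sum_comp]
    refine Fintype.sum_congr _ _ fun ⟨k, g⟩ => ?_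
    dsimp only [Fin.consEquiv, Equiv.coe_fn_mk]
    rw [← Fin.cons_snoc_eq_snoc_cons, Fin.prod_univ_succ (n := m + 1)]
    simp only [Fin.cons_zero, Fin.cons_succ]

theorem trace_pow_succ_eq_sum_prod (A : Matrix ι ι S) (m : ℕ) :
    trace (A ^ (m + 1)) = ∑ f : Fin (m + 1) → ι, ∏ t, A (f t) (f (t + 1)) := by
  simp_rw [trace, diag, pow_succ_apply_eq_sum_prod, ← finRotate_apply]
  rw [← Fintype.sum_prod_type', ← (Fin.consEquiv fun _ => ι).sum_comp]
  refine Fintype.sum_congr _ _ fun ⟨i, g⟩ => ?_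
  dsimp only [Fin.consEquiv, Equiv.coe_fn_mk]
  rw [Fin.snoc_eq_cons_rotate]

theorem trace_pow_eq_sum_prod (A : Matrix ι ι S) (m : ℕ) [NeZero m] :
    trace (A ^ m) = ∑ f : ZMod m → ι, ∏ t, A (f t) (f (t + 1)) := by
  obtain ⟨m, rfl⟩ := Nat.exists_eq_succ_of_ne_zero (NeZero.ne m)
  exact trace_pow_succ_eq_sum_prod A m

end Matrix

section Rotation

-- `ZMod N` rotates closed walks `f : ZMod N → ι` by `(a +ᵥ f) i = f (-a + i)`.
attribute [local instance] arrowAddAction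

theorem ZMod.natCast_mem_stabilizer_iff {ι : Type*} {m N : ℕ} [NeZero m] [NeZero N] (h : m ∣ N)
    (f : ZMod N → ι) :
    (m : ZMod N) ∈ AddAction.stabilizer (ZMod N) f ↔
      ∃ g : ZMod m → ι, g ∘ ZMod.castHom h _ = f := by
  set π := ZMod.castHom h (ZMod m)
  constructor
  · intro hf
    refine ⟨fun j => f (j.val : ZMod N), funext fun i => ?_⟩
    have hi : (i.val / m : ℕ) • (m : ZMod N) + ((π i).val : ZMod N) = i := by
      rw [nsmul_eq_mul, ← Nat.cast_mul, ← Nat.cast_add, ZMod.castHom_apply, ZMod.cast_eq_val,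
        ZMod.val_natCast, Nat.div_add_mod', ZMod.natCast_zmod_val]
    have hq := congrFun (AddAction.mem_stabilizer_iff.1
      (neg_mem (AddSubgroup.nsmul_mem _ hf (i.val / m)))) ((π i).val : ZMod N)
    change f (- -_ + _) = _ at hq
    rw [neg_neg, hi] at hq
    exact hq.symm
  · rintro ⟨g, rfl⟩
    rw [AddAction.mem_stabilizer_iff]
    funext i
    change g (π (-m + i)) = g (π i)
    rw [map_add, map_neg, map_natCast, ZMod.natCast_self, neg_zero, zero_add]

theorem Matrix.prime_pow_dvd_trace_pow_sub_trace_map_pow {S ι : Type*} [CommRing S] [Fintype ι]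
    [DecidableEq ι] {p : ℕ} (hp : p.Prime) (A : Matrix ι ι S) (k : ℕ) :
    (p : S) ^ (k + 1) ∣ trace (A ^ p ^ (k + 1)) - trace (A.map (· ^ p) ^ p ^ k) := by
  have : NeZero p := ⟨hp.ne_zero⟩
  have hdvd : p ^ k ∣ p ^ (k + 1) := pow_dvd_pow p k.le_succ
  set π := ZMod.castHom hdvd (ZMod (p ^ k))
  set T : (ZMod (p ^ (k + 1)) → ι) → S := fun f => ∏ i, A (f i) (f (i + 1))
  set P := univ.image fun g : ZMod (p ^ k) → ι => g ∘ π
  have hP : ∀ f, f ∈ P ↔ ((p ^ k : ℕ) : ZMod (p ^ (k + 1))) ∈ AddAction.stabilizer _ f := by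
    intro f
    simpa [P, π] using (ZMod.natCast_mem_stabilizer_iff hdvd f).symm
  have hT : ∀ (a : ZMod (p ^ (k + 1))) f, T (a +ᵥ f) = T f := fun a f =>
    Fintype.prod_equiv (Equiv.addLeft (-a)) _ _ fun i => by
      change A (f (-a + i)) (f (-a + (i + 1))) = _
      rw [← add_assoc]; rfl
  have hperiodic : ∑ f ∈ P, T f = trace (A.map (· ^ p) ^ p ^ k) := by
    rw [trace_pow_eq_sum_prod,
      sum_image (ZMod.castHom_surjective hdvd).injective_comp_right.injOn]
    refine sum_congr rfl fun g _ => ?_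
    simp only [T, Function.comp, map_add, map_one]
    rw [ZMod.prod_comp_castHom hdvd (fun j => A (g j) (g (j + 1))), pow_succ,
      Nat.mul_div_cancel_left _ (pow_pos hp.pos k)]
    rfl
  have hfree : (Fintype.card (ZMod (p ^ (k + 1))) : S) ∣ ∑ f ∈ Pᶜ, T f := by
    refine AddAction.card_dvd_sum_of_free T hT Pᶜ (fun a f hf => ?_) fun f hf a hfa => ?_
    · rw [mem_compl, hP, AddAction.stabilizer_vadd_eq_right, ← hP]
      exact mem_compl.1 hf
    · by_contra ha
      refine mem_compl.1 hf ((hP f).2 (ZMod.natCast_prime_pow_mem_of_ne_bot hp fun hbot => ha ?_))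
      rw [← AddSubgroup.mem_bot, ← hbot, AddAction.mem_stabilizer_iff]
      exact hfa
  rw [trace_pow_eq_sum_prod, ← sum_add_sum_compl P, hperiodic, add_sub_cancel_left]
  simpa using hfree

end Rotation

theorem Matrix.exists_trace_mvPolynomialX_pow_eq (ι : Type*) [Fintype ι] [DecidableEq ι] {p : ℕ}
    (hp : p.Prime) (k : ℕ) :
    ∃ x : Fin (k + 1) → MvPolynomial (ι × ι) ℤ,
      trace (mvPolynomialX ι ι ℤ ^ p ^ k) =
        ∑ i : Fin (k + 1), (p : MvPolynomial (ι × ι) ℤ) ^ (i : ℕ) * x i ^ p ^ (k - i) := by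
  refine exists_eq_sum_pow_of_frobenius_congr (MvPolynomial.expand p)
    (MvPolynomial.natCast_dvd_expand_sub_pow hp) (fun k => trace (mvPolynomialX ι ι ℤ ^ p ^ k))
    (fun k => ?_) k
  have hX : (mvPolynomialX ι ι ℤ).map (· ^ p) =
      (mvPolynomialX ι ι ℤ).map (MvPolynomial.expand p : MvPolynomial (ι × ι) ℤ →ₐ[ℤ] _) := by
    ext i j
    simp
  have := prime_pow_dvd_trace_pow_sub_trace_map_pow hp (mvPolynomialX ι ι ℤ) k
  rw [hX, ← AlgHom.mapMatrix_apply, ← map_pow, AlgHom.mapMatrix_apply,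
    ← AddMonoidHom.map_trace] at this
  exact this

theorem trace_prime_power_form_general (R : Type*) [CommRing R] (n : ℕ)
    (M : Matrix (Fin n) (Fin n) R) (p : ℕ) (hp : p.Prime) (s : ℕ) :
    ∃ x : Fin (s + 1) → R,
      Matrix.trace (M ^ (p ^ s)) =
        ∑ i : Fin (s + 1), (p : R) ^ (i : ℕ) * (x i) ^ (p ^ (s - (i : ℕ))) := by
  obtain ⟨x, hx⟩ := Matrix.exists_trace_mvPolynomialX_pow_eq (Fin n) hp s
  refine ⟨fun i => MvPolynomial.aeval (fun q : Fin n × Fin n => M q.1 q.2) (x i), ?_⟩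
  rw [← Matrix.mvPolynomialX_mapMatrix_aeval ℤ M, ← map_pow, AlgHom.mapMatrix_apply,
    ← AddMonoidHom.map_trace, hx]
  simp [map_sum]

theorem trace_prime_power_form (R : Type*) [CommRing R] (n : ℕ) (hn : 2 ≤ n)
    (M : Matrix (Fin n) (Fin n) R) (p : ℕ) (hp : p.Prime) (s : ℕ) (hs : 1 ≤ s) :
    ∃ x : Fin (s + 1) → R,
      Matrix.trace (M ^ (p ^ s)) =
        ∑ i : Fin (s + 1), (p : R) ^ (i : ℕ) * (x i) ^ (p ^ (s - (i : ℕ))) :=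
  trace_prime_power_form_general R n M p hp s
end

section
/- Let R be a commutative ring with unity. The set S_1 = { x_0^8 + 2x_1^4 + 4x_2^2 mod 8R : x_0, x_1, x_2 ∈ R } is an additive subgroup of R/8R. -/
open WittVector Finset

theorem eighth_power_set_subgroup (R : Type*) [CommRing R] :
    ∃ S : AddSubgroup (R ⧸ Ideal.span ({8} : Set R)),
      (S : Set (R ⧸ Ideal.span ({8} : Set R))) =
        {z | ∃ x₀ x₁ x₂ : R,
          z = Ideal.Quotient.mk (Ideal.span ({8} : Set R))
            (x₀ ^ 8 + 2 * x₁ ^ 4 + 4 * x₂ ^ 2)} := by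
  haveI : Fact (Nat.Prime 2) := ⟨Nat.prime_two⟩
  set I : Ideal R := Ideal.span ({8} : Set R)
  let φ : WittVector 2 R →+* R ⧸ I :=
    (Ideal.Quotient.mk I).comp (WittVector.ghostComponent 3)
  refine ⟨φ.toAddMonoidHom.range, ?_⟩
  have hg : ∀ x : WittVector 2 R, WittVector.ghostComponent 3 x =
      x.coeff 0 ^ 8 + 2 * x.coeff 1 ^ 4 + 4 * x.coeff 2 ^ 2 + 8 * x.coeff 3 := by
    intro x
    rw [WittVector.ghostComponent_apply, aeval_wittPolynomial]
    simp [Finset.sum_range_succ]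
    ring
  have h8 : ∀ r : R, Ideal.Quotient.mk I (8 * r) = 0 := by
    intro r
    rw [Ideal.Quotient.eq_zero_iff_mem]
    exact Ideal.mul_mem_right r _ (Ideal.subset_span rfl)
  ext z
  simp only [AddMonoidHom.coe_range, Set.mem_range, RingHom.toAddMonoidHom_eq_coe,
    AddMonoidHom.coe_coe, Set.mem_setOf_eq]
  constructor
  · rintro ⟨x, rfl⟩
    refine ⟨x.coeff 0, x.coeff 1, x.coeff 2, ?_⟩
    show Ideal.Quotient.mk I (WittVector.ghostComponent 3 x) = _
    rw [hg, map_add, h8, add_zero]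
  · rintro ⟨x₀, x₁, x₂, rfl⟩
    refine ⟨WittVector.mk 2 (fun i => if i = 0 then x₀ else if i = 1 then x₁
      else if i = 2 then x₂ else 0), ?_⟩
    show Ideal.Quotient.mk I (WittVector.ghostComponent 3 _) = _
    rw [hg]
    simp [WittVector.coeff_mk]
end

section
/- Let R be a commutative ring with unity. For every c ∈ R, the element 4c^2 is a sum of traces of eighth powers of 2×2 matrices over R. -/
private lemma companion_trace_pow8 {R : Type*} [CommRing R] (t d : R) :
    Matrix.trace ((!![0, -d; 1, t] : Matrix (Fin 2) (Fin 2) R) ^ 8) =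
      t ^ 8 - 8 * t ^ 6 * d + 20 * t ^ 4 * d ^ 2 - 16 * t ^ 2 * d ^ 3 + 2 * d ^ 4 := by
  simp only [pow_succ, pow_zero, Matrix.one_mul, Matrix.mul_fin_two, Matrix.trace_fin_two_of]
  ring

theorem four_c_sq_sum_traces_eighth_powers (R : Type*) [CommRing R] (c : R) :
    ∃ (r : ℕ) (P : Fin r → Matrix (Fin 2) (Fin 2) R),
      4 * c ^ 2 = ∑ i, Matrix.trace ((P i) ^ 8) := by
  refine ⟨11, ![!![0, -(c^2+3*c+2); 1, c+2], !![0, -(-c); 1, c+1],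
    !![0, -(c^2+3*c+2); 1, c+1], !![0, -(-c); 1, c],
    !![0, -(c^2+2*c+2); 1, 0], !![0, -(c^2+2*c+1); 1, c+1],
    !![0, -(c^2+2*c+2); 1, c+1], !![0, -(-c); 1, 1],
    !![0, -(1+c); 1, 1], !![0, -(1:R); 1, 1], !![0, -(1:R); 1, 1]], ?_⟩
  simp only [Fin.sum_univ_succ, Finset.sum_empty, Fin.sum_univ_zero,
    Matrix.cons_val_zero, Matrix.cons_val_succ, companion_trace_pow8]
  ring
end

section
/- Let R be a commutative ring with unity in which every element is a cube modulo 3R and every element is a square modulo 2R. Then for every α ∈ R there exist a, b, c ∈ R with α ≡ a^6 - 2b^3 + 3c^2 (mod 6R). -/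
theorem sixth_power_form_of_cube_square (R : Type*) [CommRing R]
    (hcube : ∀ α : R, ∃ x y : R, α = x ^ 3 + 3 * y)
    (hsq : ∀ α : R, ∃ x y : R, α = x ^ 2 + 2 * y) :
    ∀ α : R, ∃ a b c : R,
      α - (a ^ 6 - 2 * b ^ 3 + 3 * c ^ 2) ∈ Ideal.span ({6} : Set R) := by
  intro α
  obtain ⟨x, y, hxy⟩ := hcube α
  obtain ⟨s, t, hst⟩ := hsq x
  obtain ⟨c, v, hcv⟩ := hsq y
  refine ⟨s, -t, c, ?_⟩
  rw [Ideal.mem_span_singleton]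
  exact ⟨s ^ 4 * t + 2 * s ^ 2 * t ^ 2 + t ^ 3 + v, by subst hxy hst hcv; ring⟩
end

section
/- Let R be a commutative ring with unity in which every element is a square modulo 2R. Then for every α ∈ R there exist a, b, c ∈ R with α ≡ a^8 + 2b^4 + 4c^2 (mod 8R). -/
theorem eighth_power_form_of_square (R : Type*) [CommRing R]
    (hsq : ∀ α : R, ∃ x y : R, α = x ^ 2 + 2 * y) :
    ∀ α : R, ∃ a b c : R,
      α - (a ^ 8 + 2 * b ^ 4 + 4 * c ^ 2) ∈ Ideal.span ({8} : Set R) := by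
  intro α
  obtain ⟨x, y, hxy⟩ := hsq α
  obtain ⟨u, v, huv⟩ := hsq x
  obtain ⟨s, t, hst⟩ := hsq y
  obtain ⟨p, q, hpq⟩ := hsq u
  obtain ⟨m, n, hmn⟩ := hsq s
  obtain ⟨c, w, hcw⟩ := hsq (u ^ 2 * v + v ^ 2 + t)
  refine ⟨p, m, c, ?_⟩
  rw [Ideal.mem_span_singleton']
  refine ⟨p ^ 6 * q + 3 * p ^ 4 * q ^ 2 + 4 * p ^ 2 * q ^ 3 + 2 * q ^ 4
    + m ^ 2 * n + n ^ 2 + w, ?_⟩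
  subst hxy huv hst hmn
  subst hpq
  linear_combination -4 * hcw
end
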